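/- arXiv:2512.18579 — 2 statements merged into one kernel-verified Lean document; each statement's English description precedes it below -/
import Mathlib

section
/- Let g : [0, π/(2 C₁ C₂)) → ℝ be a C¹ function with g(0) = 0, g nonnegative, and satisfying g'(t) ≤ C₁² g(t)² + C₂² for positive constants C₁, C₂. Then for all t < π/(2 C₁ C₂), one has g(t) ≤ (C₂/C₁) · tan(C₁ C₂ t). -/
/-! The substitution `φ = arctan ((C₁ / C₂) g)` linearises the Riccati-type inequality: it turns
`g' ≤ C₁² g² + C₂²` into `φ' ≤ C₁ C₂`, so `φ(t) ≤ C₁ C₂ t` since `φ(0) = 0`, and applying the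
increasing function `tan` on `(-π/2, π/2)` gives the bound. -/

open Real Set

theorem arctan_sub_arctan_le_of_deriv_le {f f' : ℝ → ℝ} {k a : ℝ}
    (hf : ∀ t ∈ Ici a, HasDerivAt f (f' t) t)
    (hle : ∀ t ∈ Ici a, f' t ≤ k * (1 + f t ^ 2)) {t : ℝ} (hat : a ≤ t) :
    arctan (f t) - arctan (f a) ≤ k * (t - a) := by
  have hφ : ∀ s ∈ Ici a, HasDerivAt (fun x => arctan (f x)) (1 / (1 + f s ^ 2) * f' s) s :=
    fun s hs => (hf s hs).arctan
  refine (convex_Ici a).image_sub_le_mul_sub_of_deriv_le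
    (fun s hs => (hφ s hs).continuousAt.continuousWithinAt)
    (fun s hs => (hφ s (interior_subset hs)).differentiableAt.differentiableWithinAt)
    (fun s hs => ?_) a self_mem_Ici t hat hat
  have hs := interior_subset hs
  rw [(hφ s hs).deriv, one_div_mul_eq_div, div_le_iff₀ (by positivity)]
  exact hle s hs

theorem le_tan_of_arctan_le {x y : ℝ} (h : arctan y ≤ x) (hx : x < π / 2) : y ≤ tan x :=
  arctan_le_arctan_iff.mp <|
    h.trans_eq (arctan_tan ((neg_pi_div_two_lt_arctan y).trans_le h) hx).symm

theorem stmt_1_general (C₁ C₂ : ℝ) (hC₁ : 0 < C₁) (hC₂ : 0 < C₂)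
    (g g' : ℝ → ℝ)
    (hderiv : ∀ t, HasDerivAt g (g' t) t)
    (h0 : g 0 = 0)
    (hineq : ∀ t, 0 ≤ t → g' t ≤ C₁ ^ 2 * (g t) ^ 2 + C₂ ^ 2) :
    ∀ t, 0 ≤ t → t < π / (2 * C₁ * C₂) →
      g t ≤ (C₂ / C₁) * Real.tan (C₁ * C₂ * t) := by
  intro t ht htlt
  have hriccati : ∀ s ∈ Ici (0 : ℝ),
      C₁ / C₂ * g' s ≤ C₁ * C₂ * (1 + (C₁ / C₂ * g s) ^ 2) := fun s hs =>
    calc C₁ / C₂ * g' s ≤ C₁ / C₂ * (C₁ ^ 2 * g s ^ 2 + C₂ ^ 2) :=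
          mul_le_mul_of_nonneg_left (hineq s hs) (by positivity)
      _ = C₁ * C₂ * (1 + (C₁ / C₂ * g s) ^ 2) := by field_simp; ring
  have harctan : arctan (C₁ / C₂ * g t) ≤ C₁ * C₂ * t := by
    simpa [h0] using arctan_sub_arctan_le_of_deriv_le
      (fun s _ => (hderiv s).const_mul (C₁ / C₂)) hriccati ht
  have hlt : C₁ * C₂ * t < π / 2 := by
    rw [lt_div_iff₀ (by positivity)] at htlt
    linarith
  have htan := le_tan_of_arctan_le harctan hlt
  rw [← le_div_iff₀' (by positivity)] at htan
  exact htan.trans_eq (by field_simp)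

/-- Lemma 1.2 of the paper: if `g(0) = 0`, `g` is `C¹` with
`g'(t) ≤ C₁² g(t)² + C₂²`, then `g(t) ≤ (C₂/C₁) tan(C₁ C₂ t)` for
`t < π/(2 C₁ C₂)`. -/
theorem stmt_1 (C₁ C₂ : ℝ) (hC₁ : 0 < C₁) (hC₂ : 0 < C₂)
    (g g' : ℝ → ℝ)
    (hderiv : ∀ t, HasDerivAt g (g' t) t)
    (hcont : Continuous g')
    (h0 : g 0 = 0)
    (hnn : ∀ t, 0 ≤ t → 0 ≤ g t)
    (hineq : ∀ t, 0 ≤ t → g' t ≤ C₁ ^ 2 * (g t) ^ 2 + C₂ ^ 2) :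
    ∀ t, 0 ≤ t → t < π / (2 * C₁ * C₂) →
      g t ≤ (C₂ / C₁) * Real.tan (C₁ * C₂ * t) :=
  stmt_1_general C₁ C₂ hC₁ hC₂ g g' hderiv h0 hineq
end

section
/- For the boundary-layer profile matrix M(Z) = −e^{−Z}(cos(Z)·E + sin(Z)·cosγ·E₁H₀), where E is the 2×2 identity, E₁ = [[0,1],[-1,0]], H₀ = [[1+a²,ab],[ab,1+b²]] and cos γ = (1+a²+b²)^{-1/2}, the function u(Z) = M(Z/√2)·w (for any fixed w ∈ ℝ²) satisfies the ODE H₀ u'' + cos⁻¹γ · E₁ u = 0 with u(0) = −w and u(Z) → 0 as Z → +∞. -/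
open Matrix

noncomputable section

/-- `E₁ = [[0,1],[-1,0]]`. -/
def E₁ : Matrix (Fin 2) (Fin 2) ℝ := !![0, 1; -1, 0]

/-- `H₀ = [[1+a², ab],[ab, 1+b²]]`. -/
def H₀ (a b : ℝ) : Matrix (Fin 2) (Fin 2) ℝ :=
  !![1 + a ^ 2, a * b; a * b, 1 + b ^ 2]

/-- `cos γ = (1+a²+b²)^{-1/2}`. -/
def cosγ (a b : ℝ) : ℝ := (Real.sqrt (1 + a ^ 2 + b ^ 2))⁻¹

/-- Ekman boundary-layer profile matrix
`M(Z) = −e^{−Z}(cos Z · E + sin Z · cos γ · E₁H₀)`. -/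
def Mprof (a b : ℝ) (Z : ℝ) : Matrix (Fin 2) (Fin 2) ℝ :=
  -(Real.exp (-Z)) •
    (Real.cos Z • (1 : Matrix (Fin 2) (Fin 2) ℝ)
      + (Real.sin Z * cosγ a b) • (E₁ * H₀ a b))

/-!
Put `A = E₁ H₀`. Since `H₀` is symmetric, `tr A = 0` and `det A = det H₀ = cos⁻²γ`, so by
Cayley–Hamilton `A² = -cos⁻²γ`. The profile `M(t) w` is a damped oscillation
`e^{-t} (cos t • p + sin t • q)` with `p = -w`, `q = -cos γ • A w`; such functions are closed
under differentiation, and after the rescaling `t = Z/√2` the second derivative is the damped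
oscillation with coefficients `(-q, p)`. The equation then reduces to the two identities
`H₀ E₁ H₀ = det H₀ • E₁` and `E₁ E₁ = -1`.
-/

theorem Matrix.sq_eq_trace_smul_sub_det_smul_fin_two {R : Type*} [CommRing R]
    (M : Matrix (Fin 2) (Fin 2) R) : M ^ 2 = M.trace • M - M.det • 1 := by
  ext i j
  fin_cases i <;> fin_cases j <;>
    simp [sq, Matrix.mul_apply, Matrix.trace_fin_two, Matrix.det_fin_two] <;> ring

lemma E₁_mul_E₁ : E₁ * E₁ = -1 := by
  ext i j
  fin_cases i <;> fin_cases j <;> simp [E₁]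

lemma transpose_mul_E₁_mul (H : Matrix (Fin 2) (Fin 2) ℝ) : Hᵀ * E₁ * H = H.det • E₁ := by
  ext i j
  fin_cases i <;> fin_cases j <;>
    simp [E₁, Matrix.mul_apply, Matrix.det_fin_two] <;> ring

lemma sq_E₁_mul_of_isSymm {H : Matrix (Fin 2) (Fin 2) ℝ} (hH : H.IsSymm) :
    (E₁ * H) ^ 2 = -H.det • 1 := by
  have htrace : (E₁ * H).trace = 0 := by
    rw [Matrix.trace_fin_two, Matrix.mul_apply, Matrix.mul_apply]
    simp [Fin.sum_univ_two, E₁, hH.apply 0 1]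
  have hdet : (E₁ * H).det = H.det := by
    rw [Matrix.det_mul, E₁, Matrix.det_fin_two_of]
    ring
  rw [Matrix.sq_eq_trace_smul_sub_det_smul_fin_two, htrace, hdet, zero_smul, zero_sub, neg_smul]

lemma H₀_isSymm (a b : ℝ) : (H₀ a b).IsSymm := by
  ext i j
  fin_cases i <;> fin_cases j <;> simp [H₀]

lemma det_H₀ (a b : ℝ) : (H₀ a b).det = (cosγ a b)⁻¹ ^ 2 := by
  rw [cosγ, inv_inv, Real.sq_sqrt (by positivity), H₀, Matrix.det_fin_two_of]
  ring

lemma cosγ_pos (a b : ℝ) : 0 < cosγ a b := by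
  unfold cosγ
  positivity

lemma H₀_mul_E₁_mul_H₀ (a b : ℝ) : H₀ a b * (E₁ * H₀ a b) = (cosγ a b)⁻¹ ^ 2 • E₁ := by
  rw [← det_H₀, ← transpose_mul_E₁_mul, (H₀_isSymm a b).eq, Matrix.mul_assoc]

lemma E₁_mul_E₁_mul_H₀ (a b : ℝ) : E₁ * (E₁ * H₀ a b) = -H₀ a b := by
  rw [← Matrix.mul_assoc, E₁_mul_E₁, neg_one_mul]

section DampedOscillation

variable {V : Type*} [NormedAddCommGroup V] [NormedSpace ℝ V]

def dampedOsc (ω : ℝ) (p q : V) (t : ℝ) : V :=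
  Real.exp (-(ω * t)) • (Real.cos (ω * t) • p + Real.sin (ω * t) • q)

lemma hasDerivAt_dampedOsc (ω : ℝ) (p q : V) (t : ℝ) :
    HasDerivAt (dampedOsc ω p q) (dampedOsc ω (ω • (q - p)) (-(ω • (p + q))) t) t := by
  have hlin : HasDerivAt (fun s => ω * s) ω t := by
    simpa using (hasDerivAt_id t).const_mul ω
  have h := hlin.neg.exp.smul ((hlin.cos.smul_const p).add (hlin.sin.smul_const q))
  refine h.congr_deriv ?_
  simp only [dampedOsc, Pi.neg_apply, Pi.add_apply]
  module

lemma deriv_dampedOsc (ω : ℝ) (p q : V) :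
    deriv (dampedOsc ω p q) = dampedOsc ω (ω • (q - p)) (-(ω • (p + q))) :=
  funext fun t => (hasDerivAt_dampedOsc ω p q t).deriv

lemma deriv_deriv_dampedOsc (ω : ℝ) (p q : V) :
    deriv (deriv (dampedOsc ω p q)) = dampedOsc ω (-(2 * ω ^ 2) • q) ((2 * ω ^ 2) • p) := by
  rw [deriv_dampedOsc, deriv_dampedOsc]
  congr 1 <;> module

lemma dampedOsc_zero (ω : ℝ) (p q : V) : dampedOsc ω p q 0 = p := by
  simp [dampedOsc]

lemma tendsto_dampedOsc_atTop {ω : ℝ} (hω : 0 < ω) (p q : V) :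
    Filter.Tendsto (dampedOsc ω p q) Filter.atTop (nhds 0) := by
  have hexp : Filter.Tendsto (fun t => Real.exp (-(ω * t)) * (‖p‖ + ‖q‖))
      Filter.atTop (nhds 0) := by
    simpa using (Real.tendsto_exp_atBot.comp
      (Filter.tendsto_neg_atBot_iff.mpr (Filter.tendsto_id.const_mul_atTop hω))).mul_const
      (‖p‖ + ‖q‖)
  refine squeeze_zero_norm (fun t => ?_) hexp
  rw [dampedOsc, norm_smul, Real.norm_of_nonneg (Real.exp_pos _).le]
  gcongr
  calc ‖Real.cos (ω * t) • p + Real.sin (ω * t) • q‖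
      ≤ |Real.cos (ω * t)| * ‖p‖ + |Real.sin (ω * t)| * ‖q‖ := by
        simpa only [norm_smul, Real.norm_eq_abs] using norm_add_le (Real.cos (ω * t) • p) (Real.sin (ω * t) • q)
    _ ≤ ‖p‖ + ‖q‖ := by
        gcongr
        · exact mul_le_of_le_one_left (norm_nonneg p) (Real.abs_cos_le_one _)
        · exact mul_le_of_le_one_left (norm_nonneg q) (Real.abs_sin_le_one _)

end DampedOscillation

lemma Mprof_div_mulVec (a b k : ℝ) (w : Fin 2 → ℝ) :
    (fun s => Mprof a b (s / k) *ᵥ w) =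
      dampedOsc k⁻¹ (-w) (-(cosγ a b • (E₁ * H₀ a b) *ᵥ w)) := by
  funext s
  simp only [Mprof, dampedOsc, div_eq_inv_mul, Matrix.smul_mulVec, Matrix.add_mulVec,
    Matrix.one_mulVec]
  module

lemma H₀_mulVec_dampedOsc_add_E₁_mulVec_dampedOsc (a b ω t : ℝ) (w : Fin 2 → ℝ) :
    H₀ a b *ᵥ dampedOsc ω (cosγ a b • (E₁ * H₀ a b) *ᵥ w) (-w) t
      + (cosγ a b)⁻¹ • (E₁ *ᵥ dampedOsc ω (-w) (-(cosγ a b • (E₁ * H₀ a b) *ᵥ w)) t) = 0 := by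
  have hc : cosγ a b ≠ 0 := (cosγ_pos a b).ne'
  simp only [dampedOsc, Matrix.mulVec_smul, Matrix.mulVec_add, Matrix.mulVec_neg,
    Matrix.mulVec_mulVec, H₀_mul_E₁_mul_H₀, E₁_mul_E₁_mul_H₀, Matrix.smul_mulVec,
    Matrix.neg_mulVec]
  match_scalars <;> field_simp <;> ring

/-- The boundary-layer profile `u(Z) = M(Z/√2) w` solves
`H₀ u'' + cos⁻¹γ E₁ u = 0`, `u(0) = −w`, `u(Z) → 0` as `Z → ∞`; and
`(E₁H₀)² = −cos⁻²γ · E`. -/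
theorem stmt_13 (a b : ℝ) (w : Fin 2 → ℝ) :
    ((E₁ * H₀ a b) ^ 2 = -(((cosγ a b)⁻¹) ^ 2) • (1 : Matrix (Fin 2) (Fin 2) ℝ)) ∧
    (∀ Z : ℝ,
      (H₀ a b) *ᵥ
          (deriv (deriv (fun s : ℝ => (Mprof a b (s / Real.sqrt 2)) *ᵥ w)) Z)
        + (cosγ a b)⁻¹ • (E₁ *ᵥ ((Mprof a b (Z / Real.sqrt 2)) *ᵥ w)) = 0) ∧
    ((Mprof a b (0 / Real.sqrt 2)) *ᵥ w = -w) ∧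
    Filter.Tendsto (fun Z : ℝ => (Mprof a b (Z / Real.sqrt 2)) *ᵥ w)
      Filter.atTop (nhds 0) := by
  have hω : 2 * (Real.sqrt 2)⁻¹ ^ 2 = 1 := by
    rw [inv_pow, Real.sq_sqrt zero_le_two, mul_inv_cancel₀ two_ne_zero]
  have hu := Mprof_div_mulVec a b (Real.sqrt 2) w
  refine ⟨?_, fun Z => ?_, ?_, ?_⟩
  · rw [sq_E₁_mul_of_isSymm (H₀_isSymm a b), det_H₀]
  · rw [hu, deriv_deriv_dampedOsc, hω, one_smul, neg_smul, one_smul, neg_neg, congrFun hu Z]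
    exact H₀_mulVec_dampedOsc_add_E₁_mulVec_dampedOsc a b _ Z w
  · rw [congrFun hu 0, dampedOsc_zero]
  · rw [hu]
    exact tendsto_dampedOsc_atTop (by positivity) _ _

end
end
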